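/- arXiv:2101.10171 — 9 statements merged into one kernel-verified Lean document; each statement's English description precedes it below -/
import Mathlib

section
/- Let A be a commutative ring, L a Gabriel filter on A, M an A-module and N ⊆ M a submodule. Then M is totally σ-artinian if, and only if, both N and M/N are totally σ-artinian. -/
/-- A Gabriel filter on a commutative ring `A`: a set of ideals containing `⊤`,
upward closed, closed under intersections, and satisfying the Gabriel condition. -/
structure IsGabrielFilter {A : Type*} [CommRing A] (L : Set (Ideal A)) : Prop where
  top_mem : ⊤ ∈ L
  mem_of_le : ∀ {a b : Ideal A}, a ∈ L → a ≤ b → b ∈ L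
  inf_mem : ∀ {a b : Ideal A}, a ∈ L → b ∈ L → a ⊓ b ∈ L
  gabriel : ∀ b : Ideal A,
    (∃ a ∈ L, ∀ x ∈ a, Submodule.colon b (Ideal.span {x}) ∈ L) → b ∈ L

/-- An `A`-module `M` is totally σ-artinian w.r.t. `L` if every decreasing chain
of submodules `N₁ ⊇ N₂ ⊇ ⋯` admits `m` and `h ∈ L` with `Nₘ·h ⊆ Nₛ` for all `s ≥ m`. -/
def TotallySigmaArtinian {A : Type*} [CommRing A] (L : Set (Ideal A))
    (M : Type*) [AddCommGroup M] [Module A M] : Prop :=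
  ∀ N : ℕ → Submodule A M, Antitone N →
    ∃ m : ℕ, ∃ h ∈ L, ∀ s : ℕ, m ≤ s → h • N m ≤ N s


/-!
A chain `P` in `M` induces chains in `N` (intersect) and in `M ⧸ N` (project). If `h₂`
stabilises the projected chain from `m` on, then `h₂ • P m ≤ P s ⊔ (N ⊓ P m)` by the modular
law, and if `h₁` stabilises the intersected chain, then `h₁` carries `N ⊓ P m` into `P s`;
hence `(h₁ * h₂) • P m ≤ P s`. The Gabriel condition is what makes `L` closed under products.
-/

open Filter

theorem IsGabrielFilter.mul_mem {A : Type*} [CommRing A] {L : Set (Ideal A)}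
    (hL : IsGabrielFilter L) {a b : Ideal A} (ha : a ∈ L) (hb : b ∈ L) : a * b ∈ L := by
  refine hL.gabriel _ ⟨b, hb, fun x hx => hL.mem_of_le ha fun y hy => ?_⟩
  rw [Ideal.mem_colon_span_singleton]
  exact Ideal.mul_mem_mul hy hx

section

variable {A : Type*} [CommRing A] {L : Set (Ideal A)}
  {M : Type*} [AddCommGroup M] [Module A M] {M' : Type*} [AddCommGroup M'] [Module A M']

namespace TotallySigmaArtinian

theorem of_injective (hM : TotallySigmaArtinian L M) (f : M' →ₗ[A] M)
    (hf : Function.Injective f) : TotallySigmaArtinian L M' := by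
  intro P hP
  obtain ⟨m, h, hh, hle⟩ := hM (fun s => (P s).map f) fun i j hij => Submodule.map_mono (hP hij)
  refine ⟨m, h, hh, fun s hs => ?_⟩
  rw [← Submodule.map_le_map_iff_of_injective hf, Submodule.map_smul'']
  exact hle s hs

theorem of_surjective (hM : TotallySigmaArtinian L M) (f : M →ₗ[A] M')
    (hf : Function.Surjective f) : TotallySigmaArtinian L M' := by
  intro Q hQ
  obtain ⟨m, h, hh, hle⟩ :=
    hM (fun s => (Q s).comap f) fun i j hij => Submodule.comap_mono (hQ hij)
  refine ⟨m, h, hh, fun s hs => ?_⟩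
  have := Submodule.map_mono (f := f) (hle s hs)
  rwa [Submodule.map_smul'', Submodule.map_comap_eq_of_surjective hf,
    Submodule.map_comap_eq_of_surjective hf] at this

theorem eventually_smul_le (hM : TotallySigmaArtinian L M) {P : ℕ → Submodule A M}
    (hP : Antitone P) : ∃ h ∈ L, ∀ᶠ m in atTop, ∀ s, m ≤ s → h • P m ≤ P s := by
  obtain ⟨m₀, h, hh, hle⟩ := hM P hP
  exact ⟨h, hh, eventually_atTop.2 ⟨m₀, fun m hm s hs =>
    (Submodule.smul_mono le_rfl (hP hm)).trans (hle s (hm.trans hs))⟩⟩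

end TotallySigmaArtinian

namespace Submodule

theorem smul_le_sup_inf_of_smul_map_mkQ_le {h : Ideal A} {N P P' : Submodule A M} (hP' : P' ≤ P)
    (H : h • P.map N.mkQ ≤ P'.map N.mkQ) : h • P ≤ P' ⊔ (N ⊓ P) := by
  rw [← map_smul'', map_le_iff_le_comap, comap_map_mkQ, sup_comm] at H
  rw [← sup_inf_assoc_of_le N hP']
  exact le_inf H smul_le_right

theorem smul_inf_le_of_smul_comap_subtype_le {h : Ideal A} {N P P' : Submodule A M}
    (H : h • P.comap N.subtype ≤ P'.comap N.subtype) : h • (N ⊓ P) ≤ P' := by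
  rw [← map_comap_subtype, ← map_smul'']
  exact (map_mono H).trans ((map_comap_subtype N P').le.trans inf_le_right)

end Submodule

theorem TotallySigmaArtinian.of_submodule_of_quotient (hL : IsGabrielFilter L)
    {N : Submodule A M} (hN : TotallySigmaArtinian L N) (hQ : TotallySigmaArtinian L (M ⧸ N)) :
    TotallySigmaArtinian L M := by
  intro P hP
  obtain ⟨h₁, hh₁, ev₁⟩ := hN.eventually_smul_le (P := fun s => (P s).comap N.subtype)
    fun i j hij => Submodule.comap_mono (hP hij)
  obtain ⟨h₂, hh₂, ev₂⟩ := hQ.eventually_smul_le (P := fun s => (P s).map N.mkQ)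
    fun i j hij => Submodule.map_mono (hP hij)
  obtain ⟨m, hm₁, hm₂⟩ := (ev₁.and ev₂).exists
  refine ⟨m, h₁ * h₂, hL.mul_mem hh₁ hh₂, fun s hs => ?_⟩
  calc (h₁ * h₂) • P m = h₁ • h₂ • P m := Submodule.smul_assoc _ _ _
    _ ≤ h₁ • (P s ⊔ (N ⊓ P m)) :=
        Submodule.smul_mono le_rfl <|
          Submodule.smul_le_sup_inf_of_smul_map_mkQ_le (hP hs) (hm₂ s hs)
    _ = h₁ • P s ⊔ h₁ • (N ⊓ P m) := Submodule.smul_sup _ _ _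
    _ ≤ P s := sup_le Submodule.smul_le_right
        (Submodule.smul_inf_le_of_smul_comap_subtype_le (hm₁ s hs))

end

theorem totallySigmaArtinian_iff_submodule_and_quotient
    {A : Type*} [CommRing A] (L : Set (Ideal A)) (hL : IsGabrielFilter L)
    (M : Type*) [AddCommGroup M] [Module A M] (N : Submodule A M) :
    TotallySigmaArtinian L M ↔
      TotallySigmaArtinian L N ∧ TotallySigmaArtinian L (M ⧸ N) :=
  ⟨fun hM => ⟨hM.of_injective N.subtype N.injective_subtype,
      hM.of_surjective N.mkQ N.mkQ_surjective⟩,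
    fun ⟨hN, hQ⟩ => hN.of_submodule_of_quotient hL hQ⟩
end

section
/- Let A be a commutative ring and L a Gabriel filter on A. If A is totally σ-artinian with respect to L, then for every regular element a ∈ A (i.e., a non-zero-divisor) the principal ideal aA belongs to L. -/
open nonZeroDivisors

theorem Ideal.span_singleton_mul_left_mono_of_mem_nonZeroDivisors {R : Type*} [CommRing R]
    {I J : Ideal R} {x : R} (hx : x ∈ R⁰) : I * span {x} ≤ J * span {x} ↔ I ≤ J := by
  simp [SetLike.le_def, mem_mul_span_singleton, mul_cancel_right_mem_nonZeroDivisors hx]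

theorem span_regular_mem_of_totallySigmaArtinian
    {A : Type*} [CommRing A] (L : Set (Ideal A)) (hL : IsGabrielFilter L)
    (hA : TotallySigmaArtinian L A)
    (a : A) (ha : a ∈ nonZeroDivisors A) :
    Ideal.span {a} ∈ L := by
  obtain ⟨m, h, hhL, hle⟩ :=
    hA (fun n => Ideal.span {a} ^ n) fun _ _ => Ideal.pow_le_pow_right
  have hcancel : h * Ideal.span {a ^ m} ≤ Ideal.span {a} * Ideal.span {a ^ m} := by
    have := hle (m + 1) m.le_succ
    rwa [Ideal.smul_eq_mul, pow_succ', Ideal.span_singleton_pow] at this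
  exact hL.mem_of_le hhL
    ((Ideal.span_singleton_mul_left_mono_of_mem_nonZeroDivisors (pow_mem ha m)).mp hcancel)
end

section
/- Let D be an integral domain and L a Gabriel filter on D with (0) ∉ L. If D is totally σ-artinian with respect to L, then L consists exactly of the nonzero ideals of D. -/
/-!
Given `x ≠ 0`, apply the σ-artinian condition to the chain `(xⁿ)`: some `h ∈ L` satisfies
`h · (xᵐ) ⊆ (xᵐ⁺¹)`, and cancelling the nonzero `xᵐ` in the domain gives `h ⊆ (x)`.
So every nonzero ideal contains a member of `L`, while `(0) ∉ L` by hypothesis.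
-/

theorem Ideal.le_span_singleton_of_mul_span_pow_le {R : Type*} [CommRing R] [IsDomain R]
    {x : R} (hx : x ≠ 0) {h : Ideal R} {m : ℕ}
    (hle : h * Ideal.span {x ^ m} ≤ Ideal.span {x ^ (m + 1)}) : h ≤ Ideal.span {x} := by
  rw [pow_succ', ← Ideal.span_singleton_mul_span_singleton] at hle
  exact (Ideal.span_singleton_mul_left_mono (pow_ne_zero m hx)).1 hle

theorem TotallySigmaArtinian.exists_mem_mul_span_pow_le {A : Type*} [CommRing A]
    {L : Set (Ideal A)} (hA : TotallySigmaArtinian L A) (x : A) :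
    ∃ h ∈ L, ∃ m : ℕ, h * Ideal.span {x ^ m} ≤ Ideal.span {x ^ (m + 1)} := by
  have hchain : Antitone fun n : ℕ => Ideal.span {x ^ n} := fun _ _ hnm =>
    Ideal.span_singleton_le_span_singleton.2 (pow_dvd_pow x hnm)
  obtain ⟨m, h, hL, hle⟩ := hA _ hchain
  exact ⟨h, hL, m, hle (m + 1) m.le_succ⟩

theorem TotallySigmaArtinian.mem_of_ne_bot {D : Type*} [CommRing D] [IsDomain D]
    {L : Set (Ideal D)} (hL : IsGabrielFilter L) (hD : TotallySigmaArtinian L D)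
    {a : Ideal D} (ha : a ≠ ⊥) : a ∈ L := by
  obtain ⟨x, hxa, hx⟩ := (Submodule.ne_bot_iff a).1 ha
  obtain ⟨h, hhL, m, hle⟩ := hD.exists_mem_mul_span_pow_le x
  have hhx : h ≤ Ideal.span {x} := Ideal.le_span_singleton_of_mul_span_pow_le hx hle
  exact hL.mem_of_le hhL (hhx.trans ((Ideal.span_singleton_le_iff_mem a).2 hxa))

theorem gabrielFilter_eq_nonzero_ideals_of_totallySigmaArtinian
    {D : Type*} [CommRing D] [IsDomain D] (L : Set (Ideal D)) (hL : IsGabrielFilter L)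
    (hbot : (⊥ : Ideal D) ∉ L) (hD : TotallySigmaArtinian L D) :
    L = {a : Ideal D | a ≠ ⊥} := by
  ext a
  exact ⟨fun ha hbot' => hbot (hbot' ▸ ha), hD.mem_of_ne_bot hL⟩
end

section
/- Let A be a commutative ring and L a Gabriel filter on A, and suppose A is totally σ-artinian with respect to L. If a is an invertible ideal of A, that is, there exist an ideal b of A and a regular element d ∈ A (a non-zero-divisor) with a·b equal to the principal ideal dA, then a belongs to L. -/
/-! Take the chain `a ⊇ a² ⊇ a³ ⊇ ⋯`: total σ-artinianity gives `h ∈ L` with `h·aᵐ ⊆ a·aᵐ`.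
Since `aᵐ` is again invertible (`aᵐ·bᵐ = dᵐA`), it can be cancelled, so `h ⊆ a` and `a ∈ L`. -/

open scoped nonZeroDivisors

namespace Ideal

variable {A : Type*} [CommRing A]

theorem span_singleton_mul_right_mono_of_mem_nonZeroDivisors {d : A} (hd : d ∈ A⁰)
    {I J : Ideal A} : span {d} * I ≤ span {d} * J ↔ I ≤ J := by
  simp_rw [span_singleton_mul_le_span_singleton_mul, mul_cancel_left_mem_nonZeroDivisors hd,
    exists_eq_right', SetLike.le_def]

theorem le_of_mul_le_mul_of_mul_eq_span_singleton {a b c e : Ideal A} {d : A} (hd : d ∈ A⁰)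
    (hab : a * b = span {d}) (h : c * a ≤ e * a) : c ≤ e := by
  rw [← span_singleton_mul_right_mono_of_mem_nonZeroDivisors hd]
  calc span {d} * c = b * (c * a) := by rw [← hab]; ring
    _ ≤ b * (e * a) := mul_mono_right h
    _ = span {d} * e := by rw [← hab]; ring

end Ideal

theorem TotallySigmaArtinian.exists_mul_pow_le_pow_succ {A : Type*} [CommRing A]
    {L : Set (Ideal A)} (hA : TotallySigmaArtinian L A) (a : Ideal A) :
    ∃ m : ℕ, ∃ h ∈ L, h * a ^ m ≤ a ^ (m + 1) := by
  obtain ⟨m, h, hL, hle⟩ := hA (a ^ ·) fun _ _ => Ideal.pow_le_pow_right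
  exact ⟨m, h, hL, hle (m + 1) m.le_succ⟩

theorem invertible_ideal_mem_of_totallySigmaArtinian
    {A : Type*} [CommRing A] (L : Set (Ideal A)) (hL : IsGabrielFilter L)
    (hA : TotallySigmaArtinian L A)
    (a : Ideal A) (hinv : ∃ b : Ideal A, ∃ d ∈ nonZeroDivisors A, a * b = Ideal.span {d}) :
    a ∈ L := by
  obtain ⟨b, d, hd, hab⟩ := hinv
  obtain ⟨m, h, hhL, hle⟩ := hA.exists_mul_pow_le_pow_succ a
  have hpow_inv : a ^ m * b ^ m = Ideal.span {d ^ m} := by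
    rw [← mul_pow, hab, Ideal.span_singleton_pow]
  have h_le_a : h ≤ a :=
    Ideal.le_of_mul_le_mul_of_mul_eq_span_singleton (pow_mem hd m) hpow_inv (by rwa [← pow_succ'])
  exact hL.mem_of_le hhL h_le_a
end

section
/- Let f : A → B be a homomorphism of commutative rings such that every ideal of B is the extension of an ideal of A (for every ideal b of B there exists an ideal a of A with b = f(a)B), and let L be a Gabriel filter on A. If A is totally σ-artinian with respect to L, then B is totally f(σ)-artinian: for every decreasing chain b₁ ⊇ b₂ ⊇ ⋯ of ideals of B there exist an index m and an ideal k of B with f⁻¹(k) ∈ L such that bₘ·k ⊆ bₛ for every s ≥ m. -/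
theorem Ideal.map_comap_eq_self_of_eq_map {A B : Type*} [Semiring A] [Semiring B] (f : A →+* B)
    {b : Ideal B} (hb : ∃ a : Ideal A, b = Ideal.map f a) : (b.comap f).map f = b := by
  obtain ⟨a, rfl⟩ := hb
  exact Ideal.map_comap_map f a

theorem IsGabrielFilter.comap_map_mem {A B : Type*} [CommRing A] [CommRing B] (f : A →+* B)
    {L : Set (Ideal A)} (hL : IsGabrielFilter L) {h : Ideal A} (hh : h ∈ L) :
    (h.map f).comap f ∈ L :=
  hL.mem_of_le hh Ideal.le_comap_map

theorem totallySigmaArtinian_of_extension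
    {A B : Type*} [CommRing A] [CommRing B] (f : A →+* B)
    (hext : ∀ b : Ideal B, ∃ a : Ideal A, b = Ideal.map f a)
    (L : Set (Ideal A)) (hL : IsGabrielFilter L)
    (hA : TotallySigmaArtinian L A) :
    ∀ b : ℕ → Ideal B, Antitone b →
      ∃ m : ℕ, ∃ k : Ideal B, Ideal.comap f k ∈ L ∧
        ∀ s : ℕ, m ≤ s → k • b m ≤ b s := by
  intro b hb
  obtain ⟨m, h, hhL, hbound⟩ :=
    hA (fun n => (b n).comap f) fun _ _ hij => Ideal.comap_mono (hb hij)
  refine ⟨m, h.map f, hL.comap_map_mem f hhL, fun s hs => ?_⟩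
  have hcontr : h * (b m).comap f ≤ (b s).comap f := hbound s hs
  rw [← Ideal.map_comap_eq_self_of_eq_map f (hext (b m)),
    ← Ideal.map_comap_eq_self_of_eq_map f (hext (b s)), smul_eq_mul, ← Ideal.map_mul]
  exact Ideal.map_mono hcontr
end

section
/- Let A be a commutative ring and p ⊆ A a prime ideal. If A is totally (A∖p)-artinian, i.e., for every decreasing chain a₁ ⊇ a₂ ⊇ ⋯ of ideals of A there exist an index m and an element s ∈ A∖p such that aₘ·s ⊆ aₙ for every n ≥ m, then p is a minimal prime ideal of A. -/
/-!
Applied to the chain `(x) ⊇ (x²) ⊇ ⋯`, total `(A ∖ p)`-artinianity gives `s ∉ p` with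
`s xᵐ ∈ (xᵐ⁺¹)`, i.e. `(s - c x) xᵐ = 0`. For `x ∈ p` the factor `s - c x` lies outside `p`,
so every element of `p` is killed by a power of itself times an element outside `p`; a prime
`q ⊆ p` must then contain all of `p`.
-/

/-- A commutative ring `A` is totally `S`-artinian for a subset `S ⊆ A` if every decreasing
chain of ideals admits `m` and `s ∈ S` with `aₘ·s ⊆ aₙ` for every `n ≥ m`. -/
def TotallySArtinianRing (A : Type*) [CommRing A] (S : Set A) : Prop :=
  ∀ a : ℕ → Ideal A, Antitone a →
    ∃ m : ℕ, ∃ s ∈ S, ∀ n : ℕ, m ≤ n → ∀ x ∈ a m, s * x ∈ a n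

theorem Ideal.mem_minimalPrimes_of_forall_exists_mul_pow_eq_zero {A : Type*} [CommSemiring A]
    {p : Ideal A} (hp : p.IsPrime) (h : ∀ x ∈ p, ∃ s ∉ p, ∃ n : ℕ, s * x ^ n = 0) :
    p ∈ minimalPrimes A := by
  refine ⟨⟨hp, bot_le⟩, fun q ⟨hq, _⟩ hqp x hx => ?_⟩
  obtain ⟨s, hs, n, hsx⟩ := h x hx
  rcases hq.mem_or_mem (hsx ▸ q.zero_mem) with hsq | hxq
  · exact absurd (hqp hsq) hs
  · exact hq.mem_of_pow_mem n hxq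

theorem TotallySArtinianRing.exists_mul_pow_eq_mul_pow_succ {A : Type*} [CommRing A]
    {S : Set A} (hA : TotallySArtinianRing A S) (x : A) :
    ∃ s ∈ S, ∃ (m : ℕ) (c : A), s * x ^ m = c * x ^ (m + 1) := by
  have hanti : Antitone fun n : ℕ => Ideal.span {x ^ n} := fun i j hij =>
    Ideal.span_singleton_le_span_singleton.mpr (pow_dvd_pow x hij)
  obtain ⟨m, s, hs, h⟩ := hA _ hanti
  obtain ⟨c, hc⟩ :=
    Ideal.mem_span_singleton'.mp (h (m + 1) m.le_succ (x ^ m) (Ideal.subset_span rfl))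
  exact ⟨s, hs, m, c, hc.symm⟩

theorem minimal_prime_of_totallySArtinian
    {A : Type*} [CommRing A] (p : Ideal A) (hp : p.IsPrime)
    (hA : TotallySArtinianRing A {x : A | x ∉ p}) :
    p ∈ minimalPrimes A := by
  refine Ideal.mem_minimalPrimes_of_forall_exists_mul_pow_eq_zero hp fun x hx => ?_
  obtain ⟨s, hs, m, c, hsx⟩ := hA.exists_mul_pow_eq_mul_pow_succ x
  refine ⟨s - c * x, fun h => hs ?_, m, by linear_combination hsx⟩
  simpa using p.add_mem h (p.mul_mem_left c hx)
end

section
/- Let A be a commutative ring and L a Gabriel filter on A. If A is σ-artinian with respect to L, then the set K(σ) = {p : p is a prime ideal of A with p ∉ L} is finite. -/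
/-- `A` is σ-artinian w.r.t. `L`: every decreasing chain of ideals is σ-stable. -/
def SigmaArtinianRing {A : Type*} [CommRing A] (L : Set (Ideal A)) : Prop :=
  ∀ a : ℕ → Ideal A, Antitone a →
    ∃ m : ℕ, ∀ s : ℕ, m ≤ s → ∀ x ∈ a m, ∃ h ∈ L, ∀ y ∈ h, x * y ∈ a s

section

variable {A : Type*} [CommRing A]

theorem Ideal.IsPrime.colon_singleton_le {p : Ideal A} (hp : p.IsPrime) {x : A} (hx : x ∉ p) :
    p.colon {x} ≤ p := fun _ hr =>
  (hp.mem_or_mem (Submodule.mem_colon_singleton.mp hr)).resolve_right hx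

theorem Ideal.IsPrime.colon_sup_span_pow_le {p : Ideal A} (hp : p.IsPrime) {x : A} (hx : x ∉ p)
    (m : ℕ) : (p ⊔ Ideal.span {x ^ (m + 1)}).colon {x ^ m} ≤ p ⊔ Ideal.span {x} := by
  intro y hy
  obtain ⟨z, hz, w, hw, hzw⟩ := Submodule.mem_sup.mp (Submodule.mem_colon_singleton.mp hy)
  obtain ⟨c, rfl⟩ := Ideal.mem_span_singleton'.mp hw
  have hmul : (y - c * x) * x ^ m ∈ p := by
    convert hz using 1
    rw [smul_eq_mul] at hzw
    linear_combination -hzw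
  have hyc : y - c * x ∈ p :=
    (hp.mem_or_mem hmul).resolve_right fun h => hx (hp.mem_of_pow_mem m h)
  rw [show y = (y - c * x) + c * x by ring]
  exact add_mem (Ideal.mem_sup_left hyc)
    (Ideal.mem_sup_right (Ideal.mul_mem_left _ c (Ideal.mem_span_singleton_self x)))

namespace SigmaArtinianRing

variable {L : Set (Ideal A)}

theorem exists_colon_mem (hA : SigmaArtinianRing L) (hL : IsGabrielFilter L)
    {a : ℕ → Ideal A} (ha : Antitone a) :
    ∃ m, ∀ s, m ≤ s → ∀ x ∈ a m, (a s).colon {x} ∈ L := by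
  obtain ⟨m, hm⟩ := hA a ha
  refine ⟨m, fun s hs x hx => ?_⟩
  obtain ⟨h, hhL, hh⟩ := hm s hs x hx
  refine hL.mem_of_le hhL fun y hy => Submodule.mem_colon_singleton.mpr ?_
  rw [smul_eq_mul, mul_comm]
  exact hh y hy

theorem mem_of_isPrime_lt (hA : SigmaArtinianRing L) (hL : IsGabrielFilter L)
    {p q : Ideal A} (hp : p.IsPrime) (hpq : p < q) : q ∈ L := by
  obtain ⟨x, hxq, hxp⟩ := SetLike.exists_of_lt hpq
  have hanti : Antitone fun n => p ⊔ Ideal.span {x ^ n} := fun i j hij =>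
    sup_le_sup_left (Ideal.span_singleton_le_span_singleton.mpr (pow_dvd_pow x hij)) p
  obtain ⟨m, hm⟩ := hA.exists_colon_mem hL hanti
  have hxm : x ^ m ∈ p ⊔ Ideal.span {x ^ m} :=
    Ideal.mem_sup_right (Ideal.mem_span_singleton_self _)
  refine hL.mem_of_le (hm (m + 1) m.le_succ (x ^ m) hxm) ?_
  exact (hp.colon_sup_span_pow_le hxp m).trans
    (sup_le hpq.le ((Ideal.span_singleton_le_iff_mem q).mpr hxq))

theorem not_injective_of_isPrime_of_not_mem (hA : SigmaArtinianRing L) (hL : IsGabrielFilter L)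
    {g : ℕ → Ideal A} (hg : ∀ n, (g n).IsPrime ∧ g n ∉ L) : ¬ Function.Injective g := by
  intro hinj
  let a : ℕ → Ideal A := fun n => (Finset.range (n + 1)).inf g
  have ha : Antitone a := fun i j hij =>
    Finset.inf_mono (Finset.range_subset_range.mpr (by omega))
  obtain ⟨m, hm⟩ := hA.exists_colon_mem hL ha
  have hnotle : ¬ a m ≤ g (m + 1) := by
    intro hle
    obtain ⟨i, hi, hile⟩ := (hg (m + 1)).1.inf_le'.mp hle
    have hne : g i ≠ g (m + 1) := hinj.ne (by rw [Finset.mem_range] at hi; omega)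
    exact (hg (m + 1)).2 (hA.mem_of_isPrime_lt hL (hg i).1 (hile.lt_of_ne hne))
  obtain ⟨x, hxa, hxg⟩ := SetLike.not_le_iff_exists.mp hnotle
  have hcolon : (a (m + 1)).colon {x} ≤ g (m + 1) :=
    (Submodule.colon_mono (Finset.inf_le (Finset.self_mem_range_succ _)) le_rfl).trans
      ((hg (m + 1)).1.colon_singleton_le hxg)
  exact (hg (m + 1)).2 (hL.mem_of_le (hm (m + 1) m.le_succ x hxa) hcolon)

end SigmaArtinianRing

end

theorem finite_K_of_sigmaArtinian
    {A : Type*} [CommRing A] (L : Set (Ideal A)) (hL : IsGabrielFilter L)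
    (hA : SigmaArtinianRing L) :
    {p : Ideal A | p.IsPrime ∧ p ∉ L}.Finite := by
  by_contra hinf
  let f := Set.Infinite.natEmbedding _ hinf
  exact hA.not_injective_of_isPrime_of_not_mem hL (fun n => (f n).2)
    (Subtype.val_injective.comp f.injective)
end

section
/- Let A be a commutative ring. The following statements are equivalent: (a) A is an artinian ring; (b) for every prime ideal p of A, A is totally (A∖p)-artinian; (c) for every maximal ideal m of A, A is totally (A∖m)-artinian. -/
/-!
The elements `s` that eventually stabilize a decreasing chain `a` of ideals, in the sense that
`s · aₘ ⊆ aₙ` for some `m` and all `n ≥ m`, form an ideal, because the chain is decreasing. Being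
totally `(A ∖ 𝔪)`-artinian says this ideal is not contained in `𝔪`; if that holds for every maximal
ideal `𝔪`, the ideal contains `1`, i.e. the chain stabilizes.
-/

namespace Ideal

variable {A : Type*} [CommRing A]

def chainStabilizer (a : ℕ → Ideal A) (ha : Antitone a) : Ideal A where
  carrier := {s | ∃ m, ∀ n, m ≤ n → ∀ x ∈ a m, s * x ∈ a n}
  zero_mem' := ⟨0, fun n _ x _ => by simp⟩
  add_mem' := by
    rintro s t ⟨ms, hs⟩ ⟨mt, ht⟩
    refine ⟨max ms mt, fun n hn x hx => ?_⟩
    rw [add_mul]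
    exact (a n).add_mem (hs n (le_of_max_le_left hn) x (ha (le_max_left ms mt) hx))
      (ht n (le_of_max_le_right hn) x (ha (le_max_right ms mt) hx))
  smul_mem' := by
    rintro c s ⟨m, hs⟩
    refine ⟨m, fun n hn x hx => ?_⟩
    rw [smul_mul_assoc]
    exact (a n).smul_mem c (hs n hn x hx)

theorem mem_chainStabilizer {a : ℕ → Ideal A} {ha : Antitone a} {s : A} :
    s ∈ chainStabilizer a ha ↔ ∃ m, ∀ n, m ≤ n → ∀ x ∈ a m, s * x ∈ a n :=
  Iff.rfl

theorem exists_forall_eq_of_one_mem_chainStabilizer {a : ℕ → Ideal A} {ha : Antitone a}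
    (h : 1 ∈ chainStabilizer a ha) : ∃ m, ∀ n, m ≤ n → a m = a n := by
  obtain ⟨m, hm⟩ := mem_chainStabilizer.mp h
  exact ⟨m, fun n hn => le_antisymm (fun x hx => by simpa using hm n hn x hx) (ha hn)⟩

theorem chainStabilizer_eq_top_of_forall_isMaximal
    (H : ∀ 𝔪 : Ideal A, 𝔪.IsMaximal → TotallySArtinianRing A {x | x ∉ 𝔪})
    (a : ℕ → Ideal A) (ha : Antitone a) : chainStabilizer a ha = ⊤ := by
  by_contra hne
  obtain ⟨𝔪, h𝔪, hle⟩ := exists_le_maximal _ hne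
  obtain ⟨m, s, hs𝔪, hs⟩ := H 𝔪 h𝔪 a ha
  exact hs𝔪 (hle ⟨m, hs⟩)

end Ideal

theorem TotallySArtinianRing.of_isArtinianRing {A : Type*} [CommRing A] [IsArtinianRing A]
    {S : Set A} (hS : 1 ∈ S) : TotallySArtinianRing A S := fun a ha => by
  obtain ⟨m, hm⟩ := WellFoundedLT.antitone_chain_condition ha
  exact ⟨m, 1, hS, fun n hn x hx => by simpa [← hm n hn] using hx⟩

theorem isArtinianRing_of_forall_isMaximal_totallySArtinianRing {A : Type*} [CommRing A]
    (H : ∀ 𝔪 : Ideal A, 𝔪.IsMaximal → TotallySArtinianRing A {x | x ∉ 𝔪}) :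
    IsArtinianRing A :=
  monotone_stabilizes_iff_artinian.mp fun f =>
    Ideal.exists_forall_eq_of_one_mem_chainStabilizer
      ((Ideal.eq_top_iff_one _).mp
        (Ideal.chainStabilizer_eq_top_of_forall_isMaximal H _ f.monotone))

theorem isArtinianRing_iff_totallySArtinian_primes_iff_maximals
    (A : Type*) [CommRing A] :
    (IsArtinianRing A ↔
      ∀ p : Ideal A, p.IsPrime → TotallySArtinianRing A {x : A | x ∉ p}) ∧
    ((∀ p : Ideal A, p.IsPrime → TotallySArtinianRing A {x : A | x ∉ p}) ↔
      ∀ m : Ideal A, m.IsMaximal → TotallySArtinianRing A {x : A | x ∉ m}) := by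
  have primes_of_artinian (_ : IsArtinianRing A) (p : Ideal A) (hp : p.IsPrime) :
      TotallySArtinianRing A {x : A | x ∉ p} :=
    TotallySArtinianRing.of_isArtinianRing ((Ideal.ne_top_iff_one p).mp hp.ne_top)
  have maximals_of_primes
      (h : ∀ p : Ideal A, p.IsPrime → TotallySArtinianRing A {x : A | x ∉ p})
      (m : Ideal A) (hm : m.IsMaximal) : TotallySArtinianRing A {x : A | x ∉ m} :=
    h m hm.isPrime
  exact ⟨⟨primes_of_artinian, fun h =>
      isArtinianRing_of_forall_isMaximal_totallySArtinianRing (maximals_of_primes h)⟩,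
    ⟨maximals_of_primes, fun h =>
      primes_of_artinian (isArtinianRing_of_forall_isMaximal_totallySArtinianRing h)⟩⟩
end

section
/- Let A be a commutative ring and L a Gabriel filter on A of finite type, and let K(σ) = {p : p is a prime ideal of A with p ∉ L}. The following statements are equivalent: (a) A is totally σ-artinian with respect to L; (b) K(σ) is finite, there are no strict inclusions between elements of K(σ) (every element of K(σ) is maximal in K(σ)), and for every p ∈ K(σ) the ring A is totally (A∖p)-artinian, i.e., for every decreasing chain a₁ ⊇ a₂ ⊇ ⋯ of ideals there exist an index m and s ∈ A∖p with aₘ·s ⊆ aₙ for every n ≥ m. -/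
/-!
A Gabriel filter `L` is an Oka family, so an ideal maximal outside `L` is prime; for `L` of finite
type Zorn's lemma provides such an ideal above every ideal outside `L`. Hence an ideal lies in `L`
as soon as it avoids every prime of `K(σ)`.

If `A` is totally σ-artinian, testing the chains `(xⁿ) + p` (for `x ∉ p`, `p` prime) shows that
`(x) + p ∈ L`, so primes outside `L` are pairwise incomparable; testing the chain of finite
intersections `p₀ ∩ ⋯ ∩ pₙ` of distinct primes outside `L` then contradicts incomparability, so
`K(σ)` is finite; and an element of `h ∈ L` outside `p` witnesses the `(A ∖ p)`-condition.
Conversely, given a chain, the witnesses `sₚ` for the finitely many `p ∈ K(σ)` generate an ideal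
avoiding every such `p`, hence an ideal of `L` that works from the largest of the indices on.
-/

section

variable {A : Type*} [CommRing A] {L : Set (Ideal A)}

namespace IsGabrielFilter

theorem exists_mem_notMem (hL : IsGabrielFilter L) {h p : Ideal A} (hh : h ∈ L) (hp : p ∉ L) :
    ∃ s ∈ h, s ∉ p :=
  SetLike.not_le_iff_exists.mp fun hle => hp (hL.mem_of_le hh hle)

/-- Gabriel's condition for `I`, tested on `I + (a) ∈ L`: every `z = c * a + i` with `i ∈ I` has
`(I : z) ⊇ (I : a) ∈ L`. -/
theorem isOka (hL : IsGabrielFilter L) : Ideal.IsOka (· ∈ L) where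
  top := hL.top_mem
  oka {I a} hsup hcolon := by
    refine hL.gabriel I ⟨_, hsup, fun z hz => hL.mem_of_le hcolon fun u hu => ?_⟩
    obtain ⟨c, i, hi, rfl⟩ := Ideal.mem_span_singleton_sup.mp (sup_comm I _ ▸ hz)
    rw [Ideal.mem_colon_span_singleton] at hu ⊢
    have hsplit : u * (c * a + i) = c * (u * a) + u * i := by ring
    rw [hsplit]
    exact add_mem (I.mul_mem_left c hu) (I.mul_mem_left u hi)

theorem exists_le_maximal_notMem (hL : IsGabrielFilter L)
    (hft : ∀ a ∈ L, ∃ a' : Ideal A, a' ≤ a ∧ a'.FG ∧ a' ∈ L) {a : Ideal A} (ha : a ∉ L) :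
    ∃ p, a ≤ p ∧ Maximal (· ∉ L) p := by
  refine zorn_le_nonempty₀ {b | b ∉ L} (fun c hcL hc b hb => ⟨sSup c, fun hmem => ?_,
    fun _ => le_sSup⟩) a ha
  obtain ⟨a', ha'le, ha'fg, ha'L⟩ := hft _ hmem
  obtain ⟨d, hdc, ha'd⟩ :=
    (CompleteLattice.isCompactElement_iff_le_of_directed_sSup_le _ a').mp
      ((Submodule.fg_iff_compact a').mp ha'fg) c ⟨b, hb⟩ hc.directedOn ha'le
  exact hcL hdc (hL.mem_of_le ha'L ha'd)

theorem exists_le_isPrime_notMem (hL : IsGabrielFilter L)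
    (hft : ∀ a ∈ L, ∃ a' : Ideal A, a' ≤ a ∧ a'.FG ∧ a' ∈ L) {a : Ideal A} (ha : a ∉ L) :
    ∃ p, a ≤ p ∧ p.IsPrime ∧ p ∉ L := by
  obtain ⟨p, hap, hp⟩ := hL.exists_le_maximal_notMem hft ha
  exact ⟨p, hap, hL.isOka.isPrime_of_maximal_not hp, hp.prop⟩

end IsGabrielFilter

namespace TotallySigmaArtinian

theorem totallySArtinianRing (hA : TotallySigmaArtinian L A) (hL : IsGabrielFilter L)
    {p : Ideal A} (hp : p ∉ L) : TotallySArtinianRing A {x | x ∉ p} := by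
  intro a ha
  obtain ⟨m, h, hh, hm⟩ := hA a ha
  obtain ⟨s, hs, hsp⟩ := hL.exists_mem_notMem hh hp
  exact ⟨m, s, hsp, fun n hn x hx => hm n hn (Submodule.smul_mem_smul hs hx)⟩

theorem span_singleton_sup_mem (hA : TotallySigmaArtinian L A) (hL : IsGabrielFilter L)
    {p : Ideal A} (hp : p.IsPrime) {x : A} (hx : x ∉ p) : Ideal.span {x} ⊔ p ∈ L := by
  let a : ℕ → Ideal A := fun n => Ideal.span {x ^ n} ⊔ p
  have ha : Antitone a := fun n k hnk =>
    sup_le_sup_right (Ideal.span_singleton_le_span_singleton.mpr (pow_dvd_pow x hnk)) p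
  obtain ⟨m, h, hh, hm⟩ := hA a ha
  refine hL.mem_of_le hh fun y hy => ?_
  have hxm : x ^ m ∈ a m := Ideal.mem_sup_left (Ideal.mem_span_singleton_self _)
  obtain ⟨c, π, hπ, heq⟩ :=
    Ideal.mem_span_singleton_sup.mp (hm (m + 1) m.le_succ (Submodule.smul_mem_smul hy hxm))
  have hmul : (y - c * x) * x ^ m ∈ p := by
    rw [smul_eq_mul] at heq
    convert hπ using 1
    linear_combination -heq
  have hyc : y - c * x ∈ p :=
    (hp.mem_or_mem hmul).resolve_right fun hxm => hx (hp.mem_of_pow_mem m hxm)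
  exact Ideal.mem_span_singleton_sup.mpr ⟨c, y - c * x, hyc, by ring⟩

theorem eq_of_le (hA : TotallySigmaArtinian L A) (hL : IsGabrielFilter L) {p q : Ideal A}
    (hp : p.IsPrime) (hq : q ∉ L) (hpq : p ≤ q) : p = q := by
  by_contra hne
  obtain ⟨x, hxq, hxp⟩ := SetLike.exists_of_lt (lt_of_le_of_ne hpq hne)
  exact hq (hL.mem_of_le (hA.span_singleton_sup_mem hL hp hxp)
    (sup_le ((Ideal.span_singleton_le_iff_mem q).mpr hxq) hpq))

theorem finite_of_isAntichain (hA : TotallySigmaArtinian L A) (hL : IsGabrielFilter L)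
    {K : Set (Ideal A)} (hK : K ⊆ {p | p.IsPrime ∧ p ∉ L}) (hanti : IsAntichain (· ≤ ·) K) :
    K.Finite := by
  by_contra hinf
  let f := Set.Infinite.natEmbedding K hinf
  let a : ℕ → Ideal A := fun n => (Finset.range (n + 1)).inf fun i => (f i : Ideal A)
  have ha : Antitone a := fun n k hnk =>
    Finset.inf_mono (Finset.range_subset_range.mpr (Nat.succ_le_succ hnk))
  obtain ⟨m, h, hh, hm⟩ := hA a ha
  obtain ⟨hprime, hnotMem⟩ := hK (f (m + 1)).2
  obtain ⟨s, hs, hsp⟩ := hL.exists_mem_notMem hh hnotMem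
  have ham : a m ≤ f (m + 1) := fun z hz =>
    (hprime.mem_or_mem (Finset.inf_le (f := fun i => (f i : Ideal A))
      (Finset.self_mem_range_succ (m + 1))
      (hm (m + 1) m.le_succ (Submodule.smul_mem_smul hs hz)))).resolve_left hsp
  obtain ⟨i, hi, hle⟩ := hprime.inf_le'.mp ham
  have hi_eq : i = m + 1 := f.injective (Subtype.ext (hanti.eq (f i).2 (f (m + 1)).2 hle))
  exact (Finset.mem_range.mp hi).ne hi_eq

theorem of_totallySArtinianRing_of_finite {K : Set (Ideal A)} (hK : K.Finite)
    (hLK : ∀ a : Ideal A, a ∉ L → ∃ p ∈ K, a ≤ p)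
    (hart : ∀ p ∈ K, TotallySArtinianRing A {x | x ∉ p}) : TotallySigmaArtinian L A := by
  intro N hN
  choose! m s hs hm using fun p hp => hart p hp N hN
  refine ⟨hK.toFinset.sup m, Ideal.span (s '' K), ?_, fun n hn => ?_⟩
  · by_contra hnot
    obtain ⟨p, hp, hle⟩ := hLK _ hnot
    exact hs p hp (hle (Ideal.subset_span ⟨p, hp, rfl⟩))
  · have hle : ∀ p ∈ K, m p ≤ hK.toFinset.sup m := fun p hp =>
      Finset.le_sup (hK.mem_toFinset.mpr hp)
    have hcolon : Ideal.span (s '' K) ≤ (N n).colon (N (hK.toFinset.sup m)) := by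
      rw [Ideal.span_le]
      rintro _ ⟨p, hp, rfl⟩
      exact Submodule.mem_colon.mpr fun z hz =>
        hm p hp n ((hle p hp).trans hn) z (hN (hle p hp) hz)
    exact Submodule.smul_le.mpr fun r hr x hx => Submodule.mem_colon.mp (hcolon hr) x hx

end TotallySigmaArtinian

end

theorem totallySigmaArtinian_iff_finite_K_and_totallySArtinian
    {A : Type*} [CommRing A] (L : Set (Ideal A)) (hL : IsGabrielFilter L)
    (hft : ∀ a ∈ L, ∃ a' : Ideal A, a' ≤ a ∧ a'.FG ∧ a' ∈ L) :
    TotallySigmaArtinian L A ↔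
      ({p : Ideal A | p.IsPrime ∧ p ∉ L}.Finite ∧
        (∀ p ∈ {p : Ideal A | p.IsPrime ∧ p ∉ L}, ∀ q ∈ {p : Ideal A | p.IsPrime ∧ p ∉ L},
          p ≤ q → p = q) ∧
        ∀ p ∈ {p : Ideal A | p.IsPrime ∧ p ∉ L}, TotallySArtinianRing A {x : A | x ∉ p}) := by
  constructor
  · intro hA
    have hmax : ∀ p ∈ {p : Ideal A | p.IsPrime ∧ p ∉ L},
        ∀ q ∈ {p : Ideal A | p.IsPrime ∧ p ∉ L}, p ≤ q → p = q :=
      fun p hp q hq => hA.eq_of_le hL hp.1 hq.2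
    refine ⟨hA.finite_of_isAntichain hL subset_rfl ?_, hmax,
      fun p hp => hA.totallySArtinianRing hL hp.2⟩
    exact fun p hp q hq hne hle => hne (hmax p hp q hq hle)
  · rintro ⟨hfin, -, hart⟩
    refine TotallySigmaArtinian.of_totallySArtinianRing_of_finite hfin (fun a ha => ?_) hart
    obtain ⟨p, hap, hp, hpL⟩ := hL.exists_le_isPrime_notMem hft ha
    exact ⟨p, ⟨hp, hpL⟩, hap⟩
end
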